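/- arXiv:2005.05142 — 3 statements merged into one kernel-verified Lean document; each statement's English description precedes it below -/
import Mathlib

section
/- If an everywhere absolutely convergent Dirichlet series \sum_{n=1}^\infty b_n n^{-s} (with not all b_n zero and at least two nonzero coefficients b_m, b_n with m \ne n) equals e^{\rho} e^{-\lambda s} for all s \in \mathbb{C} for some \lambda \ge 0 and \rho \in \mathbb{C}, then a contradiction follows; i.e., a Dirichlet series with at least two nonzero terms cannot be of the form e^{\rho - \lambda s}. -/
/-!
Write `G` as the L-series of `b`. If `N` is the least index with `b N ≠ 0`, then
`N ^ x * G x → b N ≠ 0` as `x → ∞` along the reals. Since `N ^ x * e^(ρ - λx)` gets multiplied by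
`N / e^λ` when `x` increases by `1`, a nonzero limit forces `e^λ = N`, so `G s = e^ρ N^(-s)` is
the L-series of a single term. By uniqueness of Dirichlet coefficients `b` has only one nonzero
coefficient (among positive indices).
-/

open Filter Topology LSeries

lemma LSeries_eq_tsum_succ (f : ℕ → ℂ) (s : ℂ) :
    LSeries f s = ∑' k : ℕ, f (k + 1) * ((k + 1 : ℕ) : ℂ) ^ (-s) := by
  rw [LSeries, ← Nat.succ_injective.tsum_eq]
  · simp [Complex.cpow_neg, div_eq_mul_inv]
  · intro k hk
    exact Nat.exists_eq_succ_of_ne_zero (fun h ↦ hk (by simp [h])) |>.imp fun _ h ↦ h.symm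

lemma LSeries.abscissaOfAbsConv_lt_top_of_summable_norm {f : ℕ → ℂ}
    (hf : Summable fun k : ℕ ↦ ‖f (k + 1)‖) : abscissaOfAbsConv f < ⊤ := by
  have : LSeriesSummable f 0 := by
    refine (summable_nat_add_iff 1).mp (Summable.of_norm ?_)
    simpa [term_def] using hf
  exact this.abscissaOfAbsConv_le.trans_lt (EReal.coe_lt_top _)

lemma LSeries_single {N : ℕ} (hN : N ≠ 0) (c s : ℂ) :
    LSeries (Pi.single N c) s = c * (N : ℂ) ^ (-s) := by
  rw [LSeries, tsum_eq_single N fun k hk ↦ by simp [term_def, hk]]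
  simp [hN, Complex.cpow_neg, div_eq_mul_inv]

lemma LSeries.abscissaOfAbsConv_single_lt_top (N : ℕ) (c : ℂ) :
    abscissaOfAbsConv (Pi.single N c) < ⊤ := by
  refine (abscissaOfAbsConv_le_of_le_const ⟨‖c‖, fun k _ ↦ ?_⟩).trans_lt (EReal.coe_lt_top _)
  by_cases hk : k = N <;> simp [hk]

lemma LSeries.tendsto_cpow_mul_atTop_of_forall_lt_eq_zero {f : ℕ → ℂ} {N : ℕ} (hN : N ≠ 0)
    (hf : ∀ k ≠ 0, k < N → f k = 0) (ha : abscissaOfAbsConv f < ⊤) :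
    Tendsto (fun x : ℝ ↦ (N : ℂ) ^ (x : ℂ) * LSeries f x) atTop (𝓝 (f N)) := by
  have hcongr : ∀ {k}, k ≠ 0 → Function.update f 0 0 k = f k := fun hk ↦
    Function.update_of_ne hk ..
  obtain ⟨n, rfl⟩ := Nat.exists_eq_add_one_of_ne_zero hN
  have hvanish : ∀ k ≤ n, Function.update f 0 0 k = 0 := fun k hk ↦ by
    rcases eq_or_ne k 0 with rfl | hk0
    · simp
    · rw [hcongr hk0]
      exact hf k hk0 (by omega)
  simpa [LSeries_congr hcongr, hcongr] using
    tendsto_cpow_mul_atTop hvanish (abscissaOfAbsConv_congr hcongr ▸ ha)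

lemma eq_one_of_tendsto_of_apply_add_one_eq_mul {K : Type*} [Field K] [TopologicalSpace K]
    [ContinuousMul K] [T2Space K] {g : ℝ → K} {L c : K} (hg : Tendsto g atTop (𝓝 L))
    (hL : L ≠ 0) (hc : ∀ x, g (x + 1) = c * g x) : c = 1 := by
  have hshift : Tendsto (fun x ↦ g (x + 1)) atTop (𝓝 L) :=
    hg.comp (tendsto_atTop_add_const_right _ 1 tendsto_id)
  simp only [hc] at hshift
  have : c * L = L := tendsto_nhds_unique (hg.const_mul c) hshift
  exact mul_right_cancel₀ hL (by rw [this, one_mul])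

lemma LSeries.exists_eq_single_of_LSeries_eq_exp {f : ℕ → ℂ} (ha : abscissaOfAbsConv f < ⊤)
    {rho : ℂ} {lam : ℝ} (h : ∀ s, LSeries f s = Complex.exp (rho - lam * s)) :
    ∃ N, ∀ k ≠ 0, f k = Pi.single (M := fun _ ↦ ℂ) N (Complex.exp rho) k := by
  have hex : ∃ k, k ≠ 0 ∧ f k ≠ 0 := by
    by_contra! hzero
    have := h 0
    rw [LSeries_congr (g := 0) (hzero _), LSeries_zero] at this
    exact Complex.exp_ne_zero _ this.symm
  obtain ⟨hN, hfN⟩ := Nat.find_spec hex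
  set N := Nat.find hex
  have hlead := tendsto_cpow_mul_atTop_of_forall_lt_eq_zero hN
    (fun k hk hkN ↦ not_not.mp fun hfk ↦ Nat.find_min hex hkN ⟨hk, hfk⟩) ha
  have hN_eq : (N : ℂ) = Complex.exp lam := by
    have := eq_one_of_tendsto_of_apply_add_one_eq_mul (c := (N : ℂ) / Complex.exp lam) hlead hfN
      fun x ↦ by
        rw [h, h, Complex.ofReal_add, Complex.cpow_add _ _ (by exact_mod_cast hN),
          Complex.ofReal_one, Complex.cpow_one, mul_add, sub_add_eq_sub_sub, Complex.exp_sub]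
        field_simp
    exact (div_eq_one_iff_eq (Complex.exp_ne_zero _)).mp this
  refine ⟨N, (LSeries_eq_iff_of_abscissaOfAbsConv_lt_top ha
    (abscissaOfAbsConv_single_lt_top N _)).mp (funext fun s ↦ ?_)⟩
  rw [h, LSeries_single hN, hN_eq, Complex.cpow_def_of_ne_zero (Complex.exp_ne_zero _),
    Complex.log_exp (by simp [Real.pi_pos]) (by simp [Real.pi_pos.le]), mul_neg,
    sub_eq_add_neg, Complex.exp_add]

theorem stmt_2_general (b : ℕ → ℂ)
    (hconv : ∀ x : ℝ, Summable (fun n : ℕ => ‖b (n + 1)‖ * ((n + 1 : ℕ) : ℝ) ^ (-x)))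
    (m n : ℕ) (hm : 1 ≤ m) (hmn : m < n) (hbm : b m ≠ 0) (hbn : b n ≠ 0)
    (lam : ℝ) (rho : ℂ)
    (heq : ∀ s : ℂ, (∑' k : ℕ, b (k + 1) * ((k + 1 : ℕ) : ℂ) ^ (-s)) =
      Complex.exp (rho - lam * s)) :
    False := by
  have ha : abscissaOfAbsConv b < ⊤ :=
    abscissaOfAbsConv_lt_top_of_summable_norm (by simpa using hconv 0)
  obtain ⟨N, hN⟩ := exists_eq_single_of_LSeries_eq_exp ha fun s ↦
    (LSeries_eq_tsum_succ b s).trans (heq s)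
  have h_eq_N : ∀ k ≠ 0, b k ≠ 0 → k = N := fun k hk hbk ↦
    by_contra fun hkN ↦ hbk (by rw [hN k hk, Pi.single_eq_of_ne hkN])
  have := h_eq_N m (by omega) hbm
  have := h_eq_N n (by omega) hbn
  omega

/-- An everywhere absolutely convergent Dirichlet series with at least two
nonzero coefficients cannot equal `exp(ρ - λ s)` for all `s`. -/
theorem stmt_2 (b : ℕ → ℂ)
    (hconv : ∀ x : ℝ, Summable (fun n : ℕ => ‖b (n + 1)‖ * ((n + 1 : ℕ) : ℝ) ^ (-x)))
    (m n : ℕ) (hm : 1 ≤ m) (hmn : m < n) (hbm : b m ≠ 0) (hbn : b n ≠ 0)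
    (lam : ℝ) (hlam : 0 ≤ lam) (rho : ℂ)
    (heq : ∀ s : ℂ, (∑' k : ℕ, b (k + 1) * ((k + 1 : ℕ) : ℂ) ^ (-s)) =
      Complex.exp (rho - lam * s)) :
    False :=
  stmt_2_general b hconv m n hm hmn hbm hbn lam rho heq
end

section
/- (Gaussian line integral) For any complex A with \Re A > 0 and any complex number w, the integral over the vertical line \Re z = c (for any real c) of \exp(A(z-w)^2) dz equals i \sqrt{\pi/A}, where \sqrt{\cdot} denotes the principal branch. -/
/-- Gaussian line integral: for `Re A > 0`, `w ∈ ℂ` and any real `c`,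
`∫_{Re z = c} exp(A(z-w)²) dz = i √(π/A)` (principal square root). -/
theorem stmt_7 (A : ℂ) (hA : 0 < A.re) (w : ℂ) (c : ℝ) :
    (∫ u : ℝ, Complex.exp (A * (((c : ℂ) + u * Complex.I) - w) ^ 2) * Complex.I) =
      Complex.I * ((Real.pi : ℂ) / A) ^ (1 / 2 : ℂ) := by
  have hb : (-A).re < 0 := by simpa using hA
  have hA0 : A ≠ 0 := fun h => by simp [h] at hA
  have key := integral_cexp_quadratic hb (2 * A * ((c : ℂ) - w) * Complex.I)
    (A * ((c : ℂ) - w) ^ 2)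
  have heq : ∀ u : ℝ, A * (((c : ℂ) + u * Complex.I) - w) ^ 2 =
      (-A) * (u : ℂ) ^ 2 + (2 * A * ((c : ℂ) - w) * Complex.I) * u
        + A * ((c : ℂ) - w) ^ 2 := by
    intro u
    have : ((c : ℂ) + u * Complex.I) - w = ((c : ℂ) - w) + u * Complex.I := by ring
    rw [this]
    ring_nf
    simp [Complex.I_sq]
    ring
  simp_rw [heq, MeasureTheory.integral_mul_const, key]
  rw [mul_comm]
  congr 1
  rw [neg_neg]
  rw [show A * ((c:ℂ) - w) ^ 2 - (2 * A * ((c:ℂ) - w) * Complex.I) ^ 2 / (4 * (-A)) = 0 by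
      field_simp
      ring_nf
      simp [Complex.I_sq], Complex.exp_zero, mul_one]
end

section
/- (Closure of the rapid-decay class under multiplicative convolution, tail part) Let f, g : (0,\infty) \to \mathbb{C} be continuous, and suppose there exists \delta > 0 such that |f(y)| \le C e^{-y^\delta} and |g(y)| \le C e^{-y^\delta} for all y \ge 1, and |f(y)|, |g(y)| \le C_\kappa y^{-\kappa} for every \kappa > 0 and all y > 0. Then the multiplicative convolution f \star g(x) := \int_0^\infty f(x/y) g(y) \, dy/y satisfies |f \star g(x)| \le C' e^{-x^{\delta/2}} for all x \ge 1, for some constant C'. -/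
open MeasureTheory

/-- If `s + u ≥ 0` then `|exp s - exp u| ≥ |s - u| / 2`. -/
lemma aux_exp_diff {s u : ℝ} (h : 0 ≤ s + u) :
    |s - u| / 2 ≤ |Real.exp s - Real.exp u| := by
  wlog hsu : u ≤ s generalizing s u
  · have := this (by linarith) (by linarith : s ≤ u)
    rwa [abs_sub_comm, abs_sub_comm (Real.exp u)] at this
  have hs : 0 ≤ s := by linarith
  have h1 : Real.exp u ≤ Real.exp s := Real.exp_le_exp.2 hsu
  rw [abs_of_nonneg (by linarith : (0:ℝ) ≤ s - u), abs_of_nonneg (by linarith)]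
  rcases le_or_gt 0 u with hu | hu
  · have h2 : s - u + 1 ≤ Real.exp (s - u) := Real.add_one_le_exp _
    have h3 : 1 ≤ Real.exp u := Real.one_le_exp hu
    have h4 : Real.exp s = Real.exp u * Real.exp (s - u) := by
      rw [← Real.exp_add]; ring_nf
    nlinarith
  · have h2 : s + 1 ≤ Real.exp s := Real.add_one_le_exp _
    have h3 : Real.exp u ≤ 1 := Real.exp_le_one_iff.2 hu.le
    linarith

/-- Key exponent inequality: for `x ≥ 1`, `y > 0`,
`((x/y)^δ + y^δ)/2 ≥ x^(δ/2) + δ² (log y - (log x)/2)² / 8`. -/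
lemma aux_exponent (δ : ℝ) (hδ : 0 < δ) {x y : ℝ} (hx : 1 ≤ x) (hy : 0 < y) :
    x ^ (δ/2) + δ^2 * (Real.log y - Real.log x / 2)^2 / 8 ≤ ((x/y) ^ δ + y ^ δ) / 2 := by
  have hx0 : 0 < x := lt_of_lt_of_le one_pos hx
  have hz : 0 < x / y := div_pos hx0 hy
  set a := (x/y) ^ (δ/2) with ha
  set b := y ^ (δ/2) with hb
  have hab : a * b = x ^ (δ/2) := by
    rw [ha, hb, ← Real.mul_rpow hz.le hy.le, div_mul_cancel₀ _ hy.ne']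
  have ha2 : a * a = (x/y) ^ δ := by
    rw [ha, ← Real.rpow_add hz]; norm_num
  have hb2 : b * b = y ^ δ := by
    rw [hb, ← Real.rpow_add hy]; norm_num
  have hsa : a = Real.exp (Real.log (x/y) * (δ/2)) := by
    rw [ha, Real.rpow_def_of_pos hz]
  have hsb : b = Real.exp (Real.log y * (δ/2)) := by
    rw [hb, Real.rpow_def_of_pos hy]
  have hlogsum : Real.log (x/y) + Real.log y = Real.log x := by
    rw [Real.log_div hx0.ne' hy.ne']; ring
  have hlx : 0 ≤ Real.log x := Real.log_nonneg hx
  have hsum : 0 ≤ Real.log (x/y) * (δ/2) + Real.log y * (δ/2) := by nlinarith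
  have key := aux_exp_diff hsum
  rw [← hsa, ← hsb] at key
  have hdiff : Real.log (x/y) * (δ/2) - Real.log y * (δ/2)
      = -(δ * (Real.log y - Real.log x / 2)) := by
    have : Real.log (x/y) = Real.log x - Real.log y := by linarith
    rw [this]; ring
  rw [hdiff, abs_neg, abs_mul, abs_of_pos hδ] at key
  -- key : δ * |L| / 2 ≤ |a - b|
  set L := Real.log y - Real.log x / 2 with hL
  have h2 : (δ * |L| / 2)^2 ≤ (a - b)^2 := by
    rw [← sq_abs (a - b)]
    exact pow_le_pow_left₀ (by positivity) key 2
  have h2' : δ^2 * L^2 / 4 ≤ (a - b)^2 := by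
    have e : (δ * |L| / 2)^2 = δ^2 * L^2 / 4 := by
      rw [div_pow, mul_pow, sq_abs]; ring
    linarith [h2, e.symm.le, e.le]
  have expand : (x/y) ^ δ + y ^ δ = (a - b)^2 + 2 * (x ^ (δ/2)) := by
    rw [← ha2, ← hb2, ← hab]; ring
  linarith [h2', expand.le, expand.ge]

set_option maxHeartbeats 1000000 in
/-- Multiplicative convolution of rapid-decay functions decays rapidly:
`|f ⋆ g(x)| ≤ C' e^{-x^{δ/2}}` for `x ≥ 1`. -/
theorem stmt_10 (f g : ℝ → ℂ) (hf : ContinuousOn f (Set.Ioi 0))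
    (hg : ContinuousOn g (Set.Ioi 0)) (δ C : ℝ) (hδ : 0 < δ) (hC : 0 < C)
    (hfdec : ∀ y : ℝ, 1 ≤ y → ‖f y‖ ≤ C * Real.exp (-y ^ δ))
    (hgdec : ∀ y : ℝ, 1 ≤ y → ‖g y‖ ≤ C * Real.exp (-y ^ δ))
    (hfpoly : ∀ κ : ℝ, 0 < κ → ∃ Cκ : ℝ, 0 < Cκ ∧
      ∀ y : ℝ, 0 < y → ‖f y‖ ≤ Cκ * y ^ (-κ) ∧ ‖g y‖ ≤ Cκ * y ^ (-κ)) :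
    ∃ C' : ℝ, 0 < C' ∧ ∀ x : ℝ, 1 ≤ x →
      ‖∫ y in Set.Ioi (0 : ℝ), f (x / y) * g y / (y : ℂ)‖ ≤
        C' * Real.exp (-x ^ (δ / 2)) := by
  obtain ⟨Cκ, hCκ, hκ⟩ := hfpoly (1/2) (by norm_num)
  -- a uniform bound `‖f z‖ ≤ K z^{-1/2} e^{-z^δ/2}` valid for all z > 0, same for g
  set n : ℕ := ⌈δ⁻¹⌉₊ with hn
  set B : ℝ := 2^n * n.factorial with hB
  have hBpos : 0 < B := by positivity
  have hBbound : ∀ z : ℝ, 1 ≤ z → z ^ ((1:ℝ)/2) ≤ B * Real.exp (z ^ δ / 2) := by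
    intro z hz
    have hz0 : 0 < z := lt_of_lt_of_le one_pos hz
    have hnd : (1:ℝ)/2 ≤ (n:ℝ) * δ := by
      have h1 : δ⁻¹ ≤ (n:ℝ) := Nat.le_ceil _
      have : (1:ℝ) ≤ (n:ℝ) * δ := by
        rw [← div_le_iff₀ hδ] at *
        calc (1:ℝ)/δ = δ⁻¹ := one_div δ
          _ ≤ (n:ℝ) := h1
      linarith
    have h1 : z ^ ((1:ℝ)/2) ≤ z ^ ((n:ℝ) * δ) :=
      Real.rpow_le_rpow_of_exponent_le hz hnd
    have h2 : z ^ ((n:ℝ) * δ) = (z ^ δ) ^ (n:ℕ) := by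
      rw [mul_comm, Real.rpow_mul hz0.le, Real.rpow_natCast]
    have h3 : (z ^ δ / 2) ^ n / n.factorial ≤ Real.exp (z ^ δ / 2) :=
      Real.pow_div_factorial_le_exp (x := z ^ δ / 2) (by positivity) n
    have h4 : (z ^ δ) ^ n = 2^n * (z ^ δ / 2) ^ n := by
      rw [div_pow]; field_simp
    calc z ^ ((1:ℝ)/2) ≤ (z ^ δ) ^ n := by rw [← h2]; exact h1
      _ = 2^n * (z ^ δ / 2) ^ n := h4
      _ ≤ 2^n * (n.factorial * Real.exp (z ^ δ / 2)) := by
          have : (z ^ δ / 2) ^ n ≤ n.factorial * Real.exp (z ^ δ / 2) := by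
            rw [div_le_iff₀ (by positivity : (0:ℝ) < (n.factorial : ℝ))] at h3
            linarith [h3]
          gcongr
      _ = B * Real.exp (z ^ δ / 2) := by rw [hB]; ring
  set K : ℝ := C * B + Cκ * Real.exp (1/2) with hK
  have hKpos : 0 < K := by positivity
  have hunif : ∀ (h : ℝ → ℂ), (∀ y : ℝ, 1 ≤ y → ‖h y‖ ≤ C * Real.exp (-y ^ δ)) →
      (∀ y : ℝ, 0 < y → ‖h y‖ ≤ Cκ * y ^ (-(1/2) : ℝ)) →
      ∀ z : ℝ, 0 < z → ‖h z‖ ≤ K * z ^ (-(1/2) : ℝ) * Real.exp (-(z ^ δ / 2)) := by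
    intro h hdec hpoly z hz0
    have hzpow : (0:ℝ) < z ^ (-(1/2) : ℝ) := Real.rpow_pos_of_pos hz0 _
    rcases le_or_gt 1 z with hz1 | hz1
    · have h1 := hdec z hz1
      have h2 := hBbound z hz1
      -- e^{-z^δ} ≤ B z^{-1/2} e^{-z^δ/2}
      have h3 : Real.exp (-z ^ δ) ≤ B * z ^ (-(1/2) : ℝ) * Real.exp (-(z ^ δ / 2)) := by
        have hmul : z ^ ((1:ℝ)/2) * z ^ (-(1/2) : ℝ) = 1 := by
          rw [← Real.rpow_add hz0]; norm_num
        have := mul_le_mul_of_nonneg_right h2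
          (le_of_lt (mul_pos hzpow (Real.exp_pos (-z ^ δ))))
        calc Real.exp (-z ^ δ)
            = (z ^ ((1:ℝ)/2) * z ^ (-(1/2) : ℝ)) * Real.exp (-z ^ δ) := by rw [hmul]; ring
          _ = z ^ ((1:ℝ)/2) * (z ^ (-(1/2) : ℝ) * Real.exp (-z ^ δ)) := by ring
          _ ≤ (B * Real.exp (z ^ δ / 2)) * (z ^ (-(1/2) : ℝ) * Real.exp (-z ^ δ)) := by
              exact mul_le_mul_of_nonneg_right h2 (by positivity)
          _ = B * z ^ (-(1/2) : ℝ) * (Real.exp (z ^ δ / 2) * Real.exp (-z ^ δ)) := by ring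
          _ = B * z ^ (-(1/2) : ℝ) * Real.exp (-(z ^ δ / 2)) := by
              rw [← Real.exp_add]; congr 1; ring
      calc ‖h z‖ ≤ C * Real.exp (-z ^ δ) := h1
        _ ≤ C * (B * z ^ (-(1/2) : ℝ) * Real.exp (-(z ^ δ / 2))) := by
            exact mul_le_mul_of_nonneg_left h3 hC.le
        _ = (C * B) * z ^ (-(1/2) : ℝ) * Real.exp (-(z ^ δ / 2)) := by ring
        _ ≤ K * z ^ (-(1/2) : ℝ) * Real.exp (-(z ^ δ / 2)) := by
            have : C * B ≤ K := by
              rw [hK]; nlinarith [Real.exp_pos ((1:ℝ)/2)]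
            exact mul_le_mul_of_nonneg_right
              (mul_le_mul_of_nonneg_right this hzpow.le) (Real.exp_pos _).le
    · have h1 := hpoly z hz0
      have hzd : z ^ δ ≤ 1 := Real.rpow_le_one hz0.le hz1.le hδ.le
      have h2 : 1 ≤ Real.exp (1/2) * Real.exp (-(z ^ δ / 2)) := by
        rw [← Real.exp_add]
        apply Real.one_le_exp; linarith
      calc ‖h z‖ ≤ Cκ * z ^ (-(1/2) : ℝ) := h1
        _ = Cκ * z ^ (-(1/2) : ℝ) * 1 := by ring
        _ ≤ Cκ * z ^ (-(1/2) : ℝ) * (Real.exp (1/2) * Real.exp (-(z ^ δ / 2))) := by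
            exact mul_le_mul_of_nonneg_left h2 (by positivity)
        _ = (Cκ * Real.exp (1/2)) * z ^ (-(1/2) : ℝ) * Real.exp (-(z ^ δ / 2)) := by ring
        _ ≤ K * z ^ (-(1/2) : ℝ) * Real.exp (-(z ^ δ / 2)) := by
            have : Cκ * Real.exp (1/2) ≤ K := by rw [hK]; nlinarith
            exact mul_le_mul_of_nonneg_right
              (mul_le_mul_of_nonneg_right this hzpow.le) (Real.exp_pos _).le
  have hFb := hunif f hfdec (fun y hy => (hκ y hy).1)
  have hGb := hunif g hgdec (fun y hy => (hκ y hy).2)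
  -- the constant
  set q : ℝ := δ^2/4 with hq
  have hqpos : 0 < q := by positivity
  refine ⟨K^2 * Real.exp (δ^2/8) * (2/q), by positivity, ?_⟩
  intro x hx
  have hx0 : 0 < x := lt_of_lt_of_le one_pos hx
  set r : ℝ := x ^ ((1:ℝ)/2) with hr
  have hr1 : 1 ≤ r := Real.one_le_rpow hx (by norm_num)
  have hr0 : 0 < r := lt_of_lt_of_le one_pos hr1
  set m : ℝ := Real.log x / 2 with hm
  have hlogr : Real.log r = m := by
    rw [hr, Real.log_rpow hx0, hm]; ring
  set Φ : ℝ → ℝ := fun y => Real.exp (-(q * |Real.log y - m|)) / y with hΦ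
  set E : ℝ := K^2 * Real.exp (δ^2/8) * Real.exp (-x ^ (δ/2)) with hE
  have hEpos : 0 < E := by positivity
  -- pointwise bound
  have hpt : ∀ y ∈ Set.Ioi (0:ℝ), ‖f (x/y) * g y / (y:ℂ)‖ ≤ E * Φ y := by
    intro y hy
    have hy0 : 0 < y := hy
    have hz0 : 0 < x / y := div_pos hx0 hy0
    have hnorm : ‖f (x/y) * g y / (y:ℂ)‖ = ‖f (x/y)‖ * ‖g y‖ / y := by
      rw [norm_div, norm_mul, Complex.norm_real, Real.norm_eq_abs, abs_of_pos hy0]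
    rw [hnorm]
    have h1 := hFb (x/y) hz0
    have h2 := hGb y hy0
    have hprod : ‖f (x/y)‖ * ‖g y‖ ≤
        K^2 * ((x/y) ^ (-(1/2) : ℝ) * y ^ (-(1/2) : ℝ)) *
          Real.exp (-((x/y) ^ δ / 2) + -(y ^ δ / 2)) := by
      rw [Real.exp_add]
      calc ‖f (x/y)‖ * ‖g y‖
          ≤ (K * (x/y) ^ (-(1/2) : ℝ) * Real.exp (-((x/y) ^ δ / 2))) *
            (K * y ^ (-(1/2) : ℝ) * Real.exp (-(y ^ δ / 2))) :=
            mul_le_mul h1 h2 (norm_nonneg _) (by positivity)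
        _ = K^2 * ((x/y) ^ (-(1/2) : ℝ) * y ^ (-(1/2) : ℝ)) *
            (Real.exp (-((x/y) ^ δ / 2)) * Real.exp (-(y ^ δ / 2))) := by ring
    have hxpow : (x/y) ^ (-(1/2) : ℝ) * y ^ (-(1/2) : ℝ) ≤ 1 := by
      rw [← Real.mul_rpow hz0.le hy0.le, div_mul_cancel₀ _ hy0.ne']
      exact Real.rpow_le_one_of_one_le_of_nonpos hx (by norm_num)
    have hexp : Real.exp (-((x/y) ^ δ / 2) + -(y ^ δ / 2)) ≤
        Real.exp (δ^2/8) * Real.exp (-x ^ (δ/2)) * Real.exp (-(q * |Real.log y - m|)) := by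
      rw [← Real.exp_add, ← Real.exp_add]
      apply Real.exp_le_exp.2
      have hkey := aux_exponent δ hδ hx hy0
      set L : ℝ := Real.log y - m with hLdef
      clear_value L
      have habs : δ^2 * L^2 / 8 ≥ q * |L| - δ^2/8 := by
        have h5 : (|L| - 1)^2 ≥ 0 := sq_nonneg _
        have h6 : |L|^2 = L^2 := sq_abs L
        have h5' : 0 ≤ L^2 - 2*|L| + 1 := by nlinarith [h5, h6]
        have h7 : 0 ≤ δ^2 * (L^2 - 2*|L| + 1) := mul_nonneg (sq_nonneg δ) h5'
        rw [hq]; nlinarith [h7]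
      have : -((x/y) ^ δ / 2) + -(y ^ δ / 2) = -(((x/y) ^ δ + y ^ δ) / 2) := by ring
      rw [this]
      linarith
    have hstep : ‖f (x/y)‖ * ‖g y‖ ≤ E * Real.exp (-(q * |Real.log y - m|)) := by
      calc ‖f (x/y)‖ * ‖g y‖
          ≤ K^2 * ((x/y) ^ (-(1/2) : ℝ) * y ^ (-(1/2) : ℝ)) *
            Real.exp (-((x/y) ^ δ / 2) + -(y ^ δ / 2)) := hprod
        _ ≤ K^2 * 1 * (Real.exp (δ^2/8) * Real.exp (-x ^ (δ/2)) *
            Real.exp (-(q * |Real.log y - m|))) := by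
            apply mul_le_mul
            · exact mul_le_mul_of_nonneg_left hxpow (by positivity)
            · exact hexp
            · positivity
            · positivity
        _ = E * Real.exp (-(q * |Real.log y - m|)) := by rw [hE]; ring
    calc ‖f (x/y)‖ * ‖g y‖ / y ≤ E * Real.exp (-(q * |Real.log y - m|)) / y :=
          div_le_div_of_nonneg_right hstep hy0.le
      _ = E * Φ y := by rw [hΦ]; ring
  -- the majorant equals explicit power functions on the two pieces
  have hEq1 : Set.EqOn (fun y : ℝ => r ^ (-q) * y ^ (q - 1)) Φ (Set.Ioc 0 r) := by
    intro y hy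
    obtain ⟨hy0, hyr⟩ := hy
    have hlogy : Real.log y ≤ m := by
      rw [← hlogr]; exact Real.log_le_log hy0 hyr
    have habs : |Real.log y - m| = m - Real.log y := by
      rw [abs_of_nonpos (by linarith)]; ring
    simp only [hΦ, habs]
    have h1 : Real.exp (-(q * (m - Real.log y))) = r ^ (-q) * y ^ q := by
      rw [Real.rpow_def_of_pos hr0, Real.rpow_def_of_pos hy0, ← Real.exp_add, hlogr]
      congr 1; ring
    rw [h1]
    rw [Real.rpow_sub_one hy0.ne']
    ring
  have hEq2 : Set.EqOn (fun y : ℝ => r ^ q * y ^ (-q - 1)) Φ (Set.Ioi r) := by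
    intro y hy
    have hy0 : 0 < y := lt_trans hr0 hy
    have hlogy : m ≤ Real.log y := by
      rw [← hlogr]; exact Real.log_le_log hr0 (le_of_lt hy)
    have habs : |Real.log y - m| = Real.log y - m := abs_of_nonneg (by linarith)
    simp only [hΦ, habs]
    have h1 : Real.exp (-(q * (Real.log y - m))) = r ^ q * y ^ (-q) := by
      rw [Real.rpow_def_of_pos hr0, Real.rpow_def_of_pos hy0, ← Real.exp_add, hlogr]
      congr 1; ring
    rw [h1]
    have h2 : y ^ (-q - 1) = y ^ (-q) / y := Real.rpow_sub_one hy0.ne' (-q)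
    rw [h2]; ring
  -- integrability of the majorant
  have base1 : IntegrableOn (fun y : ℝ => y ^ (q - 1)) (Set.Ioc 0 r) := by
    rw [← intervalIntegrable_iff_integrableOn_Ioc_of_le hr0.le]
    exact intervalIntegral.intervalIntegrable_rpow' (by linarith)
  have hpow1 : IntegrableOn (fun y : ℝ => r ^ (-q) * y ^ (q - 1)) (Set.Ioc 0 r) :=
    base1.const_mul _
  have base2 : IntegrableOn (fun y : ℝ => y ^ (-q - 1)) (Set.Ioi r) :=
    integrableOn_Ioi_rpow_of_lt (by linarith) hr0
  have hpow2 : IntegrableOn (fun y : ℝ => r ^ q * y ^ (-q - 1)) (Set.Ioi r) :=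
    base2.const_mul _
  have hΦ1 : IntegrableOn Φ (Set.Ioc 0 r) := hpow1.congr_fun hEq1 measurableSet_Ioc
  have hΦ2 : IntegrableOn Φ (Set.Ioi r) := hpow2.congr_fun hEq2 measurableSet_Ioi
  have hsplit : Set.Ioc 0 r ∪ Set.Ioi r = Set.Ioi (0:ℝ) := Set.Ioc_union_Ioi_eq_Ioi hr0.le
  have hΦint : IntegrableOn Φ (Set.Ioi 0) := by
    rw [← hsplit]; exact hΦ1.union hΦ2
  -- integral of the majorant
  have hrq : r ^ (-q) * r ^ q = 1 := by
    rw [← Real.rpow_add hr0]; norm_num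
  have hint1 : ∫ y in Set.Ioc 0 r, Φ y = 1/q := by
    rw [← setIntegral_congr_fun measurableSet_Ioc hEq1, MeasureTheory.integral_const_mul,
      ← intervalIntegral.integral_of_le hr0.le,
      integral_rpow (Or.inl (by linarith : (-1:ℝ) < q - 1))]
    have h0 : (0:ℝ) ^ (q - 1 + 1) = 0 := by
      rw [show q - 1 + 1 = q by ring]; exact Real.zero_rpow hqpos.ne'
    rw [h0, show q - 1 + 1 = q by ring]
    field_simp
    nlinarith [hrq]
  have hint2 : ∫ y in Set.Ioi r, Φ y = 1/q := by
    rw [← setIntegral_congr_fun measurableSet_Ioi hEq2, MeasureTheory.integral_const_mul,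
      integral_Ioi_rpow_of_lt (by linarith : (-q - 1:ℝ) < -1) hr0]
    rw [show (-q - 1 + 1 : ℝ) = -q by ring]
    field_simp
    nlinarith [hrq]
  have hintΦ : ∫ y in Set.Ioi (0:ℝ), Φ y = 2/q := by
    rw [← hsplit, setIntegral_union (Set.Ioc_disjoint_Ioi le_rfl) measurableSet_Ioi hΦ1 hΦ2,
      hint1, hint2]
    ring
  -- putting it together
  calc ‖∫ y in Set.Ioi (0:ℝ), f (x/y) * g y / (y:ℂ)‖
      ≤ ∫ y in Set.Ioi (0:ℝ), ‖f (x/y) * g y / (y:ℂ)‖ := norm_integral_le_integral_norm _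
    _ ≤ ∫ y in Set.Ioi (0:ℝ), E * Φ y := by
        apply integral_mono_of_nonneg
        · exact Filter.Eventually.of_forall fun y => norm_nonneg _
        · exact hΦint.const_mul E
        · exact (ae_restrict_iff' measurableSet_Ioi).2 (Filter.Eventually.of_forall hpt)
    _ = E * (2/q) := by rw [MeasureTheory.integral_const_mul, hintΦ]
    _ = K^2 * Real.exp (δ^2/8) * (2/q) * Real.exp (-x ^ (δ/2)) := by rw [hE]; ring
end
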